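/- arXiv:2207.08507 — 7 statements merged into one kernel-verified Lean document; each statement's English description precedes it below -/
import Mathlib

section
/- Every non-identity element of G₃₅₁ has order 3 or 13; every element of order 3 has no fixed points on F₂₇, and every element of order 13 has exactly one fixed point on F₂₇. Consequently, G₃₅₁ contains exactly 26 elements of order 3 and exactly 324 elements of order 13. -/
/-- `F₂₇`, a finite field with 27 elements. -/
abbrev F27 : Type := GaloisField 3 3

/-- `a` is a nonzero square in `F₂₇`. -/
def IsNonzeroSquare (a : F27) : Prop := a ≠ 0 ∧ ∃ c : F27, a = c ^ 2

/-- The set of affine permutations `x ↦ a·x + b` with `a` a nonzero square. -/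
def affineSet : Set (Equiv.Perm F27) :=
  { g | ∃ a b : F27, IsNonzeroSquare a ∧ ∀ x : F27, g x = a * x + b }

/-!
The `n`-th power of `x ↦ a x + b` is `x ↦ aⁿ x + (1 + a + ⋯ + aⁿ⁻¹) b`. For `a ≠ 1` the
geometric sum vanishes as soon as `aⁿ = 1`, so the map has the order of `a`; a nonzero square
`a = c²` has `a¹³ = c²⁶ = 1`, hence order 13 when `a ≠ 1`, and the map fixes only `b / (1 - a)`.
For `a = 1` it is a translation, of order `3 = char F₂₇` and without fixed points. The nonzero
squares are the image of squaring on the cyclic group `F₂₇ˣ` of order 26, so there are 13 of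
them; this gives 26 elements of order 3 and `12 · 27 = 324` of order 13.
-/

section AffinePerm

variable {K : Type*} [Field K]

def affinePerm (u : Kˣ) (b : K) : Equiv.Perm K :=
  (Units.mulLeft u).trans (Equiv.addRight b)

@[simp]
lemma affinePerm_apply (u : Kˣ) (b x : K) : affinePerm u b x = u * x + b := rfl

lemma affinePerm_injective : Function.Injective (Function.uncurry (affinePerm (K := K))) := by
  rintro ⟨u, b⟩ ⟨v, c⟩ h
  have h0 := congr($h 0)
  have h1 := congr($h 1)
  simp only [Function.uncurry_apply_pair, affinePerm_apply, mul_zero, zero_add, mul_one] at h0 h1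
  subst h0
  simp_all [Units.val_inj]

lemma affinePerm_one_zero : affinePerm (1 : Kˣ) 0 = 1 := by
  ext x; simp

lemma affinePerm_eq_one_iff {u : Kˣ} {b : K} : affinePerm u b = 1 ↔ u = 1 ∧ b = 0 := by
  rw [← affinePerm_one_zero, ← Prod.mk.injEq]
  exact affinePerm_injective.eq_iff (a := (u, b)) (b := (1, 0))

lemma affinePerm_pow (u : Kˣ) (b : K) (n : ℕ) :
    affinePerm u b ^ n = affinePerm (u ^ n) ((∑ i ∈ Finset.range n, (u : K) ^ i) * b) := by
  induction n with
  | zero => simp [affinePerm_one_zero]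
  | succ n ih =>
    ext x
    simp only [pow_succ, Equiv.Perm.mul_apply, ih, affinePerm_apply, Finset.sum_range_succ,
      Units.val_mul, Units.val_pow_eq_pow_val]
    ring

lemma orderOf_affinePerm_of_ne_one {u : Kˣ} (hu : u ≠ 1) (b : K) :
    orderOf (affinePerm u b) = orderOf u := by
  have hu' : (u : K) ≠ 1 := by simpa [Units.val_eq_one] using hu
  refine orderOf_eq_orderOf_iff.mpr fun n => ?_
  rw [affinePerm_pow, affinePerm_eq_one_iff, and_iff_left_iff_imp]
  intro hn
  rw [geom_sum_eq hu', ← Units.val_pow_eq_pow_val, hn]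
  simp

lemma orderOf_affinePerm_one (p : ℕ) [Fact p.Prime] [CharP K p] {b : K} (hb : b ≠ 0) :
    orderOf (affinePerm 1 b) = p := by
  refine orderOf_eq_prime ?_ ?_
  · simp [affinePerm_pow, affinePerm_one_zero]
  · simpa [affinePerm_eq_one_iff] using hb

lemma affinePerm_one_apply_ne {b : K} (hb : b ≠ 0) (x : K) : affinePerm 1 b x ≠ x := by
  simpa using hb

lemma existsUnique_affinePerm_apply_eq {u : Kˣ} (hu : u ≠ 1) (b : K) :
    ∃! x, affinePerm u b x = x := by
  have hu' : 1 - (u : K) ≠ 0 := sub_ne_zero.mpr (by simpa [eq_comm, Units.val_eq_one] using hu)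
  refine ⟨b / (1 - u), ?_, fun y hy => ?_⟩
  · simp only [affinePerm_apply]
    field_simp
    ring
  · rw [eq_div_iff hu']
    simp only [affinePerm_apply] at hy
    linear_combination -hy

end AffinePerm

lemma natCard_F27 : Nat.card F27 = 27 := by
  rw [GaloisField.card 3 3 (by norm_num)]; norm_num

lemma natCard_units_F27 : Nat.card F27ˣ = 26 := by
  rw [Nat.card_units, natCard_F27]

lemma isNonzeroSquare_one : IsNonzeroSquare 1 := ⟨one_ne_zero, 1, (one_pow 2).symm⟩

lemma isNonzeroSquare_iff_mem_range {u : F27ˣ} :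
    IsNonzeroSquare u ↔ u ∈ (powMonoidHom 2 : F27ˣ →* F27ˣ).range := by
  refine ⟨fun ⟨_, c, hc⟩ => ?_, ?_⟩
  · have hc0 : c ≠ 0 := by rintro rfl; simp at hc
    exact ⟨Units.mk0 c hc0, Units.ext (by simp [hc])⟩
  · rintro ⟨v, rfl⟩
    exact ⟨Units.ne_zero _, v, by simp⟩

lemma ncard_isNonzeroSquare : {u : F27ˣ | IsNonzeroSquare u}.ncard = 13 := by
  simp_rw [isNonzeroSquare_iff_mem_range, SetLike.setOfPred_mem_eq, ← Nat.card_coe_set_eq,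
    SetLike.coe_sort_coe, IsCyclic.card_powMonoidHom_range, natCard_units_F27]
  rfl

lemma orderOf_eq_thirteen {u : F27ˣ} (hu : IsNonzeroSquare u) (h1 : u ≠ 1) : orderOf u = 13 := by
  have : Fact (Nat.Prime 13) := ⟨by norm_num⟩
  obtain ⟨v, rfl⟩ := isNonzeroSquare_iff_mem_range.mp hu
  refine orderOf_eq_prime ?_ h1
  rw [powMonoidHom_apply, ← pow_mul, show 2 * 13 = Nat.card F27ˣ from natCard_units_F27.symm]
  exact pow_card_eq_one'

lemma mem_affineSet_iff {g : Equiv.Perm F27} :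
    g ∈ affineSet ↔ ∃ (u : F27ˣ) (b : F27), IsNonzeroSquare u ∧ affinePerm u b = g := by
  constructor
  · rintro ⟨a, b, ha, hg⟩
    exact ⟨Units.mk0 a ha.1, b, ha, Equiv.ext fun x => (hg x).symm⟩
  · rintro ⟨u, b, hu, rfl⟩
    exact ⟨u, b, hu, fun x => rfl⟩

lemma ncard_affineSet_orderOf_eq (n : ℕ) :
    {g | g ∈ affineSet ∧ orderOf g = n}.ncard =
      {p : F27ˣ × F27 | IsNonzeroSquare p.1 ∧ orderOf (affinePerm p.1 p.2) = n}.ncard := by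
  rw [← Set.ncard_image_of_injective _ affinePerm_injective]
  congr 1
  ext g
  simp only [mem_affineSet_iff, Set.mem_image, Set.mem_ofPred_eq, Prod.exists,
    Function.uncurry_apply_pair]
  aesop

open Classical in
lemma orderOf_affinePerm_of_isNonzeroSquare {u : F27ˣ} (hu : IsNonzeroSquare u) (b : F27) :
    orderOf (affinePerm u b) = if u = 1 then if b = 0 then 1 else 3 else 13 := by
  split_ifs with hu1 hb
  · simp [hu1, hb, affinePerm_one_zero]
  · rw [hu1, orderOf_affinePerm_one 3 hb]
  · rw [orderOf_affinePerm_of_ne_one hu1, orderOf_eq_thirteen hu hu1]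

lemma orderOf_affinePerm_eq_three_iff {u : F27ˣ} (hu : IsNonzeroSquare u) (b : F27) :
    orderOf (affinePerm u b) = 3 ↔ u = 1 ∧ b ≠ 0 := by
  rw [orderOf_affinePerm_of_isNonzeroSquare hu]
  split_ifs <;> simp_all

lemma orderOf_affinePerm_eq_thirteen_iff {u : F27ˣ} (hu : IsNonzeroSquare u) (b : F27) :
    orderOf (affinePerm u b) = 13 ↔ u ≠ 1 := by
  rw [orderOf_affinePerm_of_isNonzeroSquare hu]
  split_ifs <;> simp_all

lemma ncard_orderOf_affinePerm_eq_three :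
    {p : F27ˣ × F27 | IsNonzeroSquare p.1 ∧ orderOf (affinePerm p.1 p.2) = 3}.ncard = 26 := by
  have h : {p : F27ˣ × F27 | IsNonzeroSquare p.1 ∧ orderOf (affinePerm p.1 p.2) = 3} =
      {1} ×ˢ {0}ᶜ := by
    ext ⟨u, b⟩
    simp only [Set.mem_ofPred_eq, Set.mem_prod, Set.mem_singleton_iff, Set.mem_compl_iff]
    refine ⟨fun ⟨hu, h3⟩ => (orderOf_affinePerm_eq_three_iff hu b).mp h3, ?_⟩
    rintro ⟨rfl, hb⟩
    exact ⟨isNonzeroSquare_one,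
      (orderOf_affinePerm_eq_three_iff isNonzeroSquare_one b).mpr ⟨rfl, hb⟩⟩
  rw [h, Set.ncard_prod, Set.ncard_singleton, Set.ncard_compl, Set.ncard_singleton, natCard_F27]

lemma ncard_orderOf_affinePerm_eq_thirteen :
    {p : F27ˣ × F27 | IsNonzeroSquare p.1 ∧ orderOf (affinePerm p.1 p.2) = 13}.ncard = 324 := by
  have h : {p : F27ˣ × F27 | IsNonzeroSquare p.1 ∧ orderOf (affinePerm p.1 p.2) = 13} =
      ({u : F27ˣ | IsNonzeroSquare u} \ {1}) ×ˢ Set.univ := by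
    ext ⟨u, b⟩
    simp only [Set.mem_ofPred_eq, Set.mem_prod, Set.mem_sdiff, Set.mem_singleton_iff, Set.mem_univ,
      and_true]
    exact and_congr_right fun hu => orderOf_affinePerm_eq_thirteen_iff hu b
  rw [h, Set.ncard_prod,
    Set.ncard_sdiff_singleton_of_mem (s := {u : F27ˣ | IsNonzeroSquare u}) isNonzeroSquare_one,
    ncard_isNonzeroSquare, Set.ncard_univ, natCard_F27]

/-- Every non-identity element of `G₃₅₁` has order 3 or 13; elements of order 3 have no
fixed points, elements of order 13 have exactly one fixed point; there are exactly 26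
elements of order 3 and 324 elements of order 13. -/
theorem statement1 (G : Subgroup (Equiv.Perm F27))
    (hG : (G : Set (Equiv.Perm F27)) = affineSet) :
    (∀ g ∈ G, g ≠ 1 → orderOf g = 3 ∨ orderOf g = 13) ∧
    (∀ g ∈ G, orderOf g = 3 → ∀ x : F27, g x ≠ x) ∧
    (∀ g ∈ G, orderOf g = 13 → ∃! x : F27, g x = x) ∧
    { g : Equiv.Perm F27 | g ∈ G ∧ orderOf g = 3 }.ncard = 26 ∧
    { g : Equiv.Perm F27 | g ∈ G ∧ orderOf g = 13 }.ncard = 324 := by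
  simp only [← SetLike.mem_coe, hG]
  refine ⟨?_, ?_, ?_, ?_, ?_⟩
  · rintro g hg hg1
    obtain ⟨u, b, hu, rfl⟩ := mem_affineSet_iff.mp hg
    rw [orderOf_affinePerm_eq_three_iff hu, orderOf_affinePerm_eq_thirteen_iff hu]
    by_cases hu1 : u = 1
    · exact Or.inl ⟨hu1, fun hb => hg1 (affinePerm_eq_one_iff.mpr ⟨hu1, hb⟩)⟩
    · exact Or.inr hu1
  · rintro g hg h3
    obtain ⟨u, b, hu, rfl⟩ := mem_affineSet_iff.mp hg
    obtain ⟨rfl, hb⟩ := (orderOf_affinePerm_eq_three_iff hu b).mp h3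
    exact affinePerm_one_apply_ne hb
  · rintro g hg h13
    obtain ⟨u, b, hu, rfl⟩ := mem_affineSet_iff.mp hg
    exact existsUnique_affinePerm_apply_eq ((orderOf_affinePerm_eq_thirteen_iff hu b).mp h13) b
  · rw [ncard_affineSet_orderOf_eq, ncard_orderOf_affinePerm_eq_three]
  · rw [ncard_affineSet_orderOf_eq, ncard_orderOf_affinePerm_eq_thirteen]
end

section
/- The group G₃₅₁ acts freely on the set of all 17-element subsets of F₂₇: if g ∈ G₃₅₁ and W is a finset of F₂₇ with exactly 17 elements such that the image of W under g equals W, then g is the identity permutation. -/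
open Finset

namespace Equiv.Perm

theorem card_filter_apply_eq_modEq_card {α : Type*} [DecidableEq α] {p : ℕ} [Fact p.Prime]
    {g : Perm α} (hg : g ^ p = 1) {s : Finset α} (hs : ∀ x, g x ∈ s ↔ x ∈ s) :
    #{x ∈ s | g x = x} ≡ #s [MOD p] := by
  have hσ : g.subtypePerm hs ^ p ^ 1 = 1 := by
    ext; simp [hg]
  have hfix : (g.subtypePerm hs).supportᶜ.map (.subtype _) = {x ∈ s | g x = x} := by
    ext; simp [and_comm]
  simpa [← hfix] using card_compl_support_modEq hσ

section Affine

variable {K : Type*} [Field K] {g : Perm K} {a b : K}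

theorem pow_apply_of_forall_apply_eq_add (hg : ∀ x, g x = x + b) (n : ℕ) (x : K) :
    (g ^ n) x = x + n * b := by
  induction n with
  | zero => simp
  | succ n ih => rw [pow_succ', mul_apply, ih, hg]; push_cast; ring

theorem pow_charP_eq_one_of_forall_apply_eq_add (p : ℕ) [CharP K p]
    (hg : ∀ x, g x = x + b) : g ^ p = 1 := by
  ext x
  simp [pow_apply_of_forall_apply_eq_add hg]

theorem pow_apply_sub_of_forall_apply_eq_mul_add (hg : ∀ x, g x = a * x + b) {x₀ : K}
    (hx₀ : g x₀ = x₀) (n : ℕ) (x : K) : (g ^ n) x - x₀ = a ^ n * (x - x₀) := by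
  rw [hg] at hx₀
  induction n with
  | zero => simp
  | succ n ih =>
    rw [pow_succ', mul_apply, hg, pow_succ]
    linear_combination a * ih + hx₀

theorem pow_eq_one_of_forall_apply_eq_mul_add (hg : ∀ x, g x = a * x + b) (ha : a ≠ 1)
    {n : ℕ} (han : a ^ n = 1) : g ^ n = 1 := by
  have hx₀ : g (b / (1 - a)) = b / (1 - a) := by
    rw [hg]
    field_simp [sub_ne_zero.mpr ha.symm]
    ring
  ext x
  simpa [han] using pow_apply_sub_of_forall_apply_eq_mul_add hg hx₀ n x

theorem eq_of_forall_apply_eq_mul_add (hg : ∀ x, g x = a * x + b) (ha : a ≠ 1) {x y : K}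
    (hx : g x = x) (hy : g y = y) : x = y := by
  rw [hg] at hx hy
  have : (a - 1) * (x - y) = 0 := by linear_combination hx - hy
  simpa [sub_eq_zero, ha] using this

end Affine

end Equiv.Perm

theorem IsNonzeroSquare.pow_thirteen_eq_one {a : F27} (ha : IsNonzeroSquare a) :
    a ^ 13 = 1 := by
  obtain ⟨ha0, c, rfl⟩ := ha
  have hc0 : c ≠ 0 := by rintro rfl; simp at ha0
  let := Fintype.ofFinite F27
  have hcard : Fintype.card F27 = 27 := by
    rw [← Nat.card_eq_fintype_card, GaloisField.card 3 3 three_ne_zero]; norm_num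
  rw [← pow_mul, ← FiniteField.pow_card_sub_one_eq_one c hc0, hcard]

open Equiv.Perm in
/-- `G₃₅₁` acts freely on the 17-element subsets of `F₂₇`: if `g ∈ G₃₅₁` maps a
17-element finset `W` onto itself, then `g` is the identity. -/
theorem statement2 (G : Subgroup (Equiv.Perm F27))
    (hG : (G : Set (Equiv.Perm F27)) = affineSet) :
    ∀ g ∈ G, ∀ W : Finset F27, W.card = 17 →
      W.map (Equiv.toEmbedding g) = W → g = 1 := by
  classical
  intro g hg W hWcard hWmap
  obtain ⟨a, b, ha, hgab⟩ : g ∈ affineSet := hG ▸ hg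
  have hW : ∀ x, g x ∈ W ↔ x ∈ W := fun x => by
    simpa using (Finset.ext_iff.mp hWmap (g x)).symm
  by_contra hne
  by_cases ha1 : a = 1
  · subst ha1
    have hb : b ≠ 0 := by rintro rfl; exact hne (by ext x; simp [hgab])
    have hg' : ∀ x, g x = x + b := by simpa using hgab
    have := Fact.mk Nat.prime_three
    have hmod := card_filter_apply_eq_modEq_card (pow_charP_eq_one_of_forall_apply_eq_add 3 hg') hW
    have hfix : {x ∈ W | g x = x} = ∅ := filter_eq_empty_iff.mpr fun x _ => by simp [hg', hb]
    rw [hfix, hWcard] at hmod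
    norm_num [Nat.ModEq] at hmod
  · have := Fact.mk (by norm_num : (13).Prime)
    have hmod := card_filter_apply_eq_modEq_card
      (pow_eq_one_of_forall_apply_eq_mul_add hgab ha1 ha.pow_thirteen_eq_one) hW
    have hfix : #{x ∈ W | g x = x} ≤ 1 := card_le_one.mpr fun x hx y hy =>
      eq_of_forall_apply_eq_mul_add hgab ha1 (mem_filter.mp hx).2 (mem_filter.mp hy).2
    rw [hWcard] at hmod
    unfold Nat.ModEq at hmod
    omega
end

section
/- The group G₃₅₁ acts transitively on the 2-element subsets of F₂₇: for any elements u ≠ v and u' ≠ v' of F₂₇ there exists g ∈ G₃₅₁ whose image of the set {u, v} is {u', v'}. -/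
noncomputable instance : Fintype F27 := Fintype.ofFinite _

lemma F27_card : Fintype.card F27 = 27 := by
  have := GaloisField.card (p := 3) (n := 3) (by norm_num)
  rw [← Nat.card_eq_fintype_card]
  simpa using this

lemma F27_ringChar : ringChar F27 = 3 := by
  exact ringChar.eq F27 3

lemma sq_or (r : F27) (hr : r ≠ 0) : IsNonzeroSquare r ∨ IsNonzeroSquare (-r) := by
  have hc2 : ringChar F27 ≠ 2 := by rw [F27_ringChar]; norm_num
  have key : ∀ x : F27, x ≠ 0 → (IsSquare x ↔ x ^ 13 = 1) := by
    intro x hx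
    have := FiniteField.isSquare_iff hc2 hx
    rwa [F27_card] at this
  have h26 : r ^ 26 = 1 := by
    have := FiniteField.pow_card_sub_one_eq_one r hr
    rwa [F27_card] at this
  have hsq : (r ^ 13) ^ 2 = 1 := by rw [← pow_mul]; exact h26
  have : r ^ 13 = 1 ∨ r ^ 13 = -1 := by
    have := mul_self_eq_one_iff.mp (by rw [← sq (r ^ 13)]; exact hsq)
    exact this
  rcases this with h | h
  · left
    refine ⟨hr, ?_⟩
    obtain ⟨c, hc⟩ := (key r hr).mpr h
    exact ⟨c, by rw [hc, sq]⟩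
  · right
    have hnr : -r ≠ 0 := neg_ne_zero.mpr hr
    have : (-r) ^ 13 = 1 := by
      rw [neg_pow, h]; norm_num
    refine ⟨hnr, ?_⟩
    obtain ⟨c, hc⟩ := (key (-r) hnr).mpr this
    exact ⟨c, by rw [hc, sq]⟩

/-- `G₃₅₁` acts transitively on the 2-element subsets of `F₂₇`. -/
theorem statement3 (G : Subgroup (Equiv.Perm F27))
    (hG : (G : Set (Equiv.Perm F27)) = affineSet) :
    ∀ u v u' v' : F27, u ≠ v → u' ≠ v' →
      ∃ g ∈ G, (⇑g) '' ({u, v} : Set F27) = {u', v'} := by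
  intro u v u' v' huv huv'
  have hd : v - u ≠ 0 := sub_ne_zero.mpr (Ne.symm huv)
  have hd' : v' - u' ≠ 0 := sub_ne_zero.mpr (Ne.symm huv')
  -- generic construction
  have main : ∀ a b : F27, IsNonzeroSquare a →
      ∃ g ∈ G, ∀ x : F27, g x = a * x + b := by
    intro a b ha
    refine ⟨(Equiv.mulLeft₀ a ha.1).trans (Equiv.addRight b), ?_, ?_⟩
    · rw [← SetLike.mem_coe, hG]
      exact ⟨a, b, ha, fun x => rfl⟩
    · intro x; rfl
  set r : F27 := (v' - u') / (v - u) with hrdef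
  have hr : r ≠ 0 := div_ne_zero hd' hd
  rcases sq_or r hr with hsq | hsq
  · obtain ⟨g, hgG, hg⟩ := main r (u' - r * u) hsq
    refine ⟨g, hgG, ?_⟩
    rw [Set.image_pair]
    have h1 : g u = u' := by rw [hg]; ring
    have h2 : g v = v' := by
      rw [hg, hrdef]
      field_simp
      ring
    rw [h1, h2]
  · obtain ⟨g, hgG, hg⟩ := main (-r) (v' + r * u) hsq
    refine ⟨g, hgG, ?_⟩
    rw [Set.image_pair]
    have h1 : g u = v' := by rw [hg]; ring
    have h2 : g v = u' := by
      rw [hg, hrdef]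
      field_simp
      ring
    rw [h1, h2]
    exact Set.pair_comm v' u'
end

section
/- Every element of G₃₅₁ is a symmetry of the tournament Γ, and the Frobenius permutation F : x ↦ x³ of F₂₇ is a symmetry of Γ. Moreover, G₃₅₁ acts transitively on the directed edges of Γ: for any a, b ∈ F₂₇ such that b − a is a nonzero square, there exists g ∈ G₃₅₁ with g(0) = a and g(1) = b. -/
/-- `g` is a symmetry of the tournament `Γ` on `F₂₇` whose directed edges `(a, b)`
are the pairs with `b - a` a nonzero square. -/
def IsTournamentSym (g : Equiv.Perm F27) : Prop :=
  ∀ a b : F27, IsNonzeroSquare (b - a) ↔ IsNonzeroSquare (g b - g a)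

/-! An affine map of `G₃₅₁` multiplies each difference `b - a` by a fixed nonzero square, and a
field automorphism such as the Frobenius commutes with taking differences; both preserve the
nonzero squares. The affine map `x ↦ (b - a) x + a` carries the edge `(0, 1)` to `(a, b)`. -/

section IsSquare

variable {α : Type*}

theorem isSquare_map_iff {β E : Type*} [MulOneClass α] [MulOneClass β] [EquivLike E α β]
    [MulEquivClass E α β] (e : E) {a : α} : IsSquare (e a) ↔ IsSquare a :=
  ⟨fun h => by simpa using h.map (MulEquivClass.toMulEquiv e).symm, IsSquare.map e⟩

theorem isSquare_mul_iff_of_isSquare_left [CommGroupWithZero α] {a b : α} (ha : IsSquare a)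
    (ha₀ : a ≠ 0) : IsSquare (a * b) ↔ IsSquare b := by
  refine ⟨fun h => ?_, ha.mul⟩
  simpa [inv_mul_cancel_left₀ ha₀] using (isSquare_inv.mpr ha).mul h

end IsSquare

theorem isNonzeroSquare_iff {a : F27} : IsNonzeroSquare a ↔ a ≠ 0 ∧ IsSquare a := by
  rw [IsNonzeroSquare, isSquare_iff_exists_sq]

theorem IsNonzeroSquare.mul_iff {a : F27} (ha : IsNonzeroSquare a) {d : F27} :
    IsNonzeroSquare (a * d) ↔ IsNonzeroSquare d := by
  rw [isNonzeroSquare_iff] at ha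
  simp [isNonzeroSquare_iff, ha.1, isSquare_mul_iff_of_isSquare_left ha.2 ha.1]

theorem isTournamentSym_of_sub_eq {g : Equiv.Perm F27} {φ : F27 → F27}
    (hφ : ∀ d, IsNonzeroSquare (φ d) ↔ IsNonzeroSquare d) (hg : ∀ a b, g b - g a = φ (b - a)) :
    IsTournamentSym g :=
  fun a b => by rw [hg, hφ]

theorem isTournamentSym_of_mem_affineSet {g : Equiv.Perm F27} (hg : g ∈ affineSet) :
    IsTournamentSym g := by
  obtain ⟨A, B, hA, hgx⟩ := hg
  exact isTournamentSym_of_sub_eq (fun _ => hA.mul_iff) fun a b => by rw [hgx, hgx]; ring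

theorem isTournamentSym_ringEquiv (σ : F27 ≃+* F27) : IsTournamentSym σ.toEquiv := by
  refine isTournamentSym_of_sub_eq (φ := σ) (fun d => ?_) fun a b => (map_sub σ b a).symm
  simp only [isNonzeroSquare_iff, ne_eq, map_eq_zero_iff σ σ.injective, isSquare_map_iff]

theorem exists_mem_affineSet_apply_zero_apply_one {a b : F27} (hab : IsNonzeroSquare (b - a)) :
    ∃ g ∈ affineSet, g 0 = a ∧ g 1 = b :=
  ⟨(Equiv.mulLeft₀ (b - a) hab.1).trans (Equiv.addRight a), ⟨b - a, a, hab, fun _ => rfl⟩,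
    by simp, by simp⟩

/-- Every element of `G₃₅₁` is a symmetry of `Γ`; the Frobenius permutation `x ↦ x³`
is a symmetry of `Γ`; and `G₃₅₁` acts transitively on the directed edges of `Γ`. -/
theorem statement4 (G : Subgroup (Equiv.Perm F27))
    (hG : (G : Set (Equiv.Perm F27)) = affineSet) :
    (∀ g ∈ G, IsTournamentSym g) ∧
    (∃ F : Equiv.Perm F27, (∀ x : F27, F x = x ^ 3) ∧ IsTournamentSym F) ∧
    (∀ a b : F27, IsNonzeroSquare (b - a) → ∃ g ∈ G, g 0 = a ∧ g 1 = b) := by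
  simp only [← SetLike.mem_coe, hG]
  exact ⟨fun g => isTournamentSym_of_mem_affineSet,
    ⟨(frobeniusEquiv F27 3).toEquiv, frobeniusEquiv_def F27 3, isTournamentSym_ringEquiv _⟩,
    fun a b => exists_mem_affineSet_apply_zero_apply_one⟩
end

section
/- Let G be a finite group acting on a finite type X, and let H be a subgroup of G. Then the number of elements x ∈ X whose stabilizer in G equals H is [N_G(H) : H] times the number of orbits of the action that contain at least one point whose stabilizer equals H, where N_G(H) is the normalizer of H in G. -/
/-!
Since `g • x` has stabilizer `g H g⁻¹` when `x` has stabilizer `H`, the points with stabilizer `H`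
in the orbit of such an `x` form exactly the `N_G(H)`-orbit of `x`, whose stabilizer in `N_G(H)`
is `H`. So every orbit meeting the set contributes `[N_G(H) : H]` points.
-/

open MulAction

theorem Set.ncard_eq_mul_ncard_image_of_ncard_fiber {α β : Type*} {f : α → β} {s : Set α}
    (hs : s.Finite) {n : ℕ} (hn : ∀ a ∈ s, {a' ∈ s | f a' = f a}.ncard = n) :
    s.ncard = n * (f '' s).ncard := by
  classical
  lift s to Finset α using hs
  rw [ncard_coe_finset, ← Finset.coe_image, ncard_coe_finset, Finset.card_eq_sum_card_image f s,
    Finset.sum_congr rfl (g := fun _ => n), Finset.sum_const, smul_eq_mul, mul_comm]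
  rintro _ hb
  obtain ⟨a, ha, rfl⟩ := Finset.mem_image.mp hb
  rw [← hn a ha, ← ncard_coe_finset, Finset.coe_filter]
  rfl

namespace MulAction

variable {G X : Type*} [Group G] [MulAction G X]

theorem stabilizer_smul_eq_iff_mem_normalizer (g : G) (x : X) :
    stabilizer G (g • x) = stabilizer G x ↔ g ∈ Subgroup.normalizer (stabilizer G x : Set G) := by
  rw [stabilizer_smul_eq_stabilizer_map_conj, Subgroup.mem_normalizer_iff_map_conj_eq]
  rfl

theorem orbit_normalizer_stabilizer (x : X) :
    orbit (Subgroup.normalizer (stabilizer G x : Set G)) x =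
      {y ∈ orbit G x | stabilizer G y = stabilizer G x} := by
  ext y
  constructor
  · rintro ⟨⟨g, hg⟩, rfl⟩
    exact ⟨⟨g, rfl⟩, (stabilizer_smul_eq_iff_mem_normalizer g x).mpr hg⟩
  · rintro ⟨⟨g, rfl⟩, hg⟩
    exact ⟨⟨g, (stabilizer_smul_eq_iff_mem_normalizer g x).mp hg⟩, rfl⟩

theorem ncard_setOf_mem_orbit_stabilizer_eq (x : X) :
    {y ∈ orbit G x | stabilizer G y = stabilizer G x}.ncard =
      ((stabilizer G x).subgroupOf (Subgroup.normalizer (stabilizer G x : Set G))).index := by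
  rw [← orbit_normalizer_stabilizer, ← index_stabilizer]
  rfl

end MulAction

theorem statement13_general (G : Type*) [Group G] (X : Type*) [Finite X]
    [MulAction G X] (H : Subgroup G) :
    { x : X | MulAction.stabilizer G x = H }.ncard =
      (H.subgroupOf (Subgroup.normalizer (H : Set G))).index *
        { q : Quotient (MulAction.orbitRel G X) |
            ∃ x : X, Quotient.mk (MulAction.orbitRel G X) x = q ∧
              MulAction.stabilizer G x = H }.ncard := by
  have hq : { q : Quotient (orbitRel G X) |
      ∃ x : X, Quotient.mk (orbitRel G X) x = q ∧ stabilizer G x = H } =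
        Quotient.mk (orbitRel G X) '' { x | stabilizer G x = H } := by
    ext q
    simp only [Set.mem_image, Set.mem_ofPred_eq, and_comm]
  rw [hq]
  refine Set.ncard_eq_mul_ncard_image_of_ncard_fiber (Set.toFinite _) fun x (hx : _ = H) => ?_
  subst hx
  simp only [Quotient.eq, orbitRel_apply]
  rw [← ncard_setOf_mem_orbit_stabilizer_eq x]
  congr 1
  ext y
  exact and_comm

/-- Let a finite group `G` act on a finite type `X`, and let `H ≤ G`. The number of points
of `X` whose stabilizer equals `H` is `[N_G(H) : H]` times the number of orbits containing
at least one point whose stabilizer equals `H`. -/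
theorem statement13 (G : Type*) [Group G] [Finite G] (X : Type*) [Finite X]
    [MulAction G X] (H : Subgroup G) :
    { x : X | MulAction.stabilizer G x = H }.ncard =
      (H.subgroupOf (Subgroup.normalizer (H : Set G))).index *
        { q : Quotient (MulAction.orbitRel G X) |
            ∃ x : X, Quotient.mk (MulAction.orbitRel G X) x = q ∧
              MulAction.stabilizer G x = H }.ncard :=
  statement13_general G X H
end

section
/- Let P be the subgroup of G₃₅₁ consisting of the additive translations x ↦ x + b for b ∈ F₂₇ (the Sylow 3-subgroup of G₃₅₁, of order 27). For the action of G₃₅₁ on subsets of G₃₅₁ by left translation, the number of subsets S ⊆ G₃₅₁ whose stabilizer is exactly P equals 2¹³ − 2, and these subsets form exactly 630 orbits. -/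
open Pointwise

/-! The slope map `(x ↦ a * x + b) ↦ a` is a homomorphism from `G₃₅₁` onto the 13 nonzero
squares of `F₂₇` with kernel `P`, so `P` is normal of prime index 13. A set whose stabilizer
contains `P` is a union of cosets of `P`, i.e. the preimage of a subset `T` of `G₃₅₁ ⧸ P ≅ C₁₃`,
and its stabilizer is exactly `P` iff `T` has trivial stabilizer; as 13 is prime, that means
`T ≠ ∅, univ`, leaving `2¹³ − 2` sets. Each of their orbits has `[G₃₅₁ : P] = 13` elements,
so there are `(2¹³ − 2) / 13 = 630` orbits. -/

open MulAction

section QuotientStabilizer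

variable {H : Type*} [Group H] (N : Subgroup H) [N.Normal]

lemma smul_preimage_mk' (g : H) (T : Set (H ⧸ N)) :
    g • (QuotientGroup.mk' N ⁻¹' T) = QuotientGroup.mk' N ⁻¹' (QuotientGroup.mk' N g • T) := by
  ext k
  simp [Set.mem_smul_set_iff_inv_smul_mem, smul_eq_mul]

lemma stabilizer_preimage_mk' (T : Set (H ⧸ N)) :
    stabilizer H (QuotientGroup.mk' N ⁻¹' T) =
      (stabilizer (H ⧸ N) T).comap (QuotientGroup.mk' N) := by
  ext g
  rw [mem_stabilizer_iff, Subgroup.mem_comap, mem_stabilizer_iff, smul_preimage_mk']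
  exact (QuotientGroup.mk'_surjective N).preimage_injective.eq_iff

lemma preimage_image_mk'_of_le_stabilizer {S : Set H} (hS : N ≤ stabilizer H S) :
    QuotientGroup.mk' N ⁻¹' (QuotientGroup.mk' N '' S) = S := by
  refine Set.Subset.antisymm ?_ (Set.subset_preimage_image _ _)
  rintro k ⟨s, hs, hsk⟩
  obtain ⟨z, hz, rfl⟩ := (QuotientGroup.mk'_eq_mk' N).1 hsk
  -- `s * z = (s * z * s⁻¹) • s`, and `s * z * s⁻¹ ∈ N` stabilizes `S`
  have hconj := mem_stabilizer_set.1 (hS (Subgroup.Normal.conj_mem ‹_› z hz s)) s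
  rwa [smul_eq_mul, inv_mul_cancel_right, iff_true_right hs] at hconj

lemma setOf_stabilizer_eq :
    {S : Set H | stabilizer H S = N} =
      (QuotientGroup.mk' N ⁻¹' ·) '' {T : Set (H ⧸ N) | stabilizer (H ⧸ N) T = ⊥} := by
  ext S
  constructor
  · intro hS
    have hpre := preimage_image_mk'_of_le_stabilizer N hS.ge
    refine ⟨QuotientGroup.mk' N '' S, ?_, hpre⟩
    apply Subgroup.comap_injective (QuotientGroup.mk'_surjective N)
    rw [← stabilizer_preimage_mk', hpre, MonoidHom.comap_bot, QuotientGroup.ker_mk']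
    exact hS
  · rintro ⟨T, hT, rfl⟩
    rw [Set.mem_ofPred_eq, stabilizer_preimage_mk', hT, MonoidHom.comap_bot, QuotientGroup.ker_mk']

end QuotientStabilizer

lemma stabilizer_set_eq_top_iff {Q : Type*} [Group Q] {T : Set Q} :
    stabilizer Q T = ⊤ ↔ T = ∅ ∨ T = Set.univ := by
  refine ⟨fun h => ?_, by rintro (rfl | rfl) <;> simp⟩
  refine T.eq_empty_or_nonempty.imp_right fun ⟨t, ht⟩ => Set.eq_univ_of_forall fun r => ?_
  have hmem := mem_stabilizer_set.1 (h ▸ Subgroup.mem_top (r * t⁻¹)) t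
  rwa [smul_eq_mul, inv_mul_cancel_right, iff_true_right ht] at hmem

lemma setOf_stabilizer_eq_bot_of_card_prime {Q : Type*} [Group Q] (hp : (Nat.card Q).Prime) :
    {T : Set Q | stabilizer Q T = ⊥} = {T | T ≠ ∅ ∧ T ≠ Set.univ} := by
  have : Fact (Nat.card Q).Prime := ⟨hp⟩
  have : Finite Q := Nat.finite_of_card_ne_zero hp.ne_zero
  have : Nontrivial Q := Finite.one_lt_card_iff_nontrivial.1 hp.one_lt
  ext T
  rw [Set.mem_ofPred_eq, Set.mem_ofPred_eq, ← not_or, ← stabilizer_set_eq_top_iff]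
  rcases (stabilizer Q T).eq_bot_or_eq_top_of_prime_card with h | h <;> simp [h]

lemma ncard_setOf_ne_empty_ne_univ (α : Type*) [Finite α] [Nonempty α] :
    {T : Set α | T ≠ ∅ ∧ T ≠ Set.univ}.ncard = 2 ^ Nat.card α - 2 := by
  have hcompl : {T : Set α | T ≠ ∅ ∧ T ≠ Set.univ} = ({∅, Set.univ} : Set (Set α))ᶜ := by
    ext T; simp
  have : Fintype α := Fintype.ofFinite α
  rw [hcompl, Set.ncard_compl, Set.ncard_pair Set.empty_ne_univ, Nat.card_eq_fintype_card,
    Fintype.card_set, Nat.card_eq_fintype_card]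

lemma ncard_setOf_stabilizer_eq_of_index_prime {H : Type*} [Group H] (N : Subgroup H) [N.Normal]
    (hp : N.index.Prime) :
    {S : Set H | stabilizer H S = N}.ncard = 2 ^ N.index - 2 := by
  have : Finite (H ⧸ N) := Nat.finite_of_card_ne_zero hp.ne_zero
  rw [setOf_stabilizer_eq N,
    Set.ncard_image_of_injective _ (QuotientGroup.mk'_surjective N).preimage_injective,
    setOf_stabilizer_eq_bot_of_card_prime hp, ncard_setOf_ne_empty_ne_univ, Subgroup.index]

lemma stabilizer_smul_eq_of_normal {G α : Type*} [Group G] [MulAction G α] {N : Subgroup G}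
    [N.Normal] {a : α} (ha : stabilizer G a = N) (g : G) : stabilizer G (g • a) = N := by
  rw [stabilizer_smul_eq_stabilizer_map_conj, ha]
  exact Subgroup.Normal.map_conj_eq N g

lemma ncard_setOf_stabilizer_eq_eq_index_mul {G α : Type*} [Group G] [MulAction G α] [Finite α]
    (N : Subgroup G) [N.Normal] :
    {a : α | stabilizer G a = N}.ncard =
      N.index * (Quotient.mk (orbitRel G α) '' {a | stabilizer G a = N}).ncard := by
  classical
  have : Fintype (Quotient (orbitRel G α)) := Fintype.ofFinite _
  set A := {a : α | stabilizer G a = N}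
  set B := Quotient.mk (orbitRel G α) '' A
  have hA : A = Quotient.mk (orbitRel G α) ⁻¹' B := by
    refine (Set.subset_preimage_image _ _).antisymm ?_
    rintro a ⟨b, hb, hba⟩
    obtain ⟨g, rfl⟩ := Quotient.exact hba.symm
    exact stabilizer_smul_eq_of_normal hb g
  have hfiber : ∀ q ∈ B, Nat.card {a // Quotient.mk (orbitRel G α) a = q} = N.index := by
    rintro q ⟨b, hb, rfl⟩
    rw [← hb, index_stabilizer, ← Nat.card_coe_set_eq]
    exact Nat.card_congr (Equiv.subtypeEquivRight fun a => Quotient.eq.trans (orbitRel_apply ..))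
  rw [← Nat.card_coe_set_eq, hA, ← B.coe_toFinset,
    Finset.card_preimage_eq_sum_card_image_eq fun _ _ => Set.toFinite _,
    Finset.sum_congr rfl fun q hq => hfiber q (B.mem_toFinset.1 hq), Finset.sum_const, smul_eq_mul,
    mul_comm, Set.ncard_coe_finset]

lemma slope_of_mem_affineSet {g : Equiv.Perm F27} (hg : g ∈ affineSet) :
    IsNonzeroSquare (g 1 - g 0) ∧ ∀ x : F27, g x = (g 1 - g 0) * x + g 0 := by
  obtain ⟨a, b, ha, hab⟩ := hg
  have h1 : g 1 - g 0 = a := by rw [hab, hab]; ring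
  have h0 : g 0 = b := by rw [hab]; ring
  exact h1 ▸ h0 ▸ ⟨ha, hab⟩

section Slope

variable (G : Subgroup (Equiv.Perm F27)) (hG : (G : Set (Equiv.Perm F27)) ⊆ affineSet)

/-- `g ↦ a` for `g x = a * x + b`. -/
noncomputable def slopeHom : G →* F27ˣ where
  toFun g := Units.mk0 (g.1 1 - g.1 0) (slope_of_mem_affineSet (hG g.2)).1.1
  map_one' := by ext; simp
  map_mul' g h := by
    ext
    have hg := (slope_of_mem_affineSet (hG g.2)).2
    simp only [Units.val_mul, Units.val_mk0, Subgroup.coe_mul, Equiv.Perm.mul_apply, hg (h.1 1),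
      hg (h.1 0)]
    ring

lemma mem_ker_slopeHom_iff (g : G) :
    g ∈ (slopeHom G hG).ker ↔ ∃ b : F27, ∀ x : F27, (g : Equiv.Perm F27) x = x + b := by
  rw [MonoidHom.mem_ker, Units.ext_iff, slopeHom, MonoidHom.coe_mk, OneHom.coe_mk, Units.val_mk0,
    Units.val_one]
  constructor
  · intro h
    exact ⟨g.1 0, fun x => by rw [(slope_of_mem_affineSet (hG g.2)).2 x, h, one_mul]⟩
  · rintro ⟨b, hb⟩
    rw [hb, hb]
    ring

end Slope

lemma range_slopeHom (G : Subgroup (Equiv.Perm F27))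
    (hG : (G : Set (Equiv.Perm F27)) = affineSet) :
    (slopeHom G hG.subset).range = (powMonoidHom 2 : F27ˣ →* F27ˣ).range := by
  ext u
  constructor
  · rintro ⟨g, rfl⟩
    obtain ⟨hne, c, hc⟩ := (slope_of_mem_affineSet (hG.subset g.2)).1
    have hc0 : c ≠ 0 := by rintro rfl; exact hne (by simpa using hc)
    exact ⟨Units.mk0 c hc0, Units.ext (by simp [slopeHom, hc])⟩
  · rintro ⟨v, rfl⟩
    have hmem : Equiv.mulLeft₀ ((v ^ 2 : F27ˣ) : F27) (v ^ 2).ne_zero ∈ G := by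
      rw [← SetLike.mem_coe, hG]
      exact ⟨_, 0, ⟨(v ^ 2).ne_zero, v, by simp⟩, fun x => by simp⟩
    exact ⟨⟨_, hmem⟩, Units.ext (by simp [slopeHom])⟩

lemma card_range_powMonoidHom_two : Nat.card (powMonoidHom 2 : F27ˣ →* F27ˣ).range = 13 := by
  rw [IsCyclic.card_powMonoidHom_range, Nat.card_units, GaloisField.card 3 3 (by norm_num)]
  norm_num

/-- Let `P ≤ G₃₅₁` be the subgroup of additive translations `x ↦ x + b` (of order 27).
For the action of `G₃₅₁` on its subsets by left translation, the number of subsets whose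
stabilizer is exactly `P` equals `2¹³ − 2`, and these subsets form exactly 630 orbits. -/
theorem statement16 (G : Subgroup (Equiv.Perm F27))
    (hG : (G : Set (Equiv.Perm F27)) = affineSet)
    (P : Subgroup G)
    (hP : ∀ g : G, g ∈ P ↔ ∃ b : F27, ∀ x : F27, (g : Equiv.Perm F27) x = x + b) :
    { S : Set G | MulAction.stabilizer G S = P }.ncard = 2 ^ 13 - 2 ∧
    { q : Quotient (MulAction.orbitRel G (Set G)) |
        ∃ S : Set G, Quotient.mk (MulAction.orbitRel G (Set G)) S = q ∧
          MulAction.stabilizer G S = P }.ncard = 630 := by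
  have hPker : P = (slopeHom G hG.subset).ker :=
    SetLike.ext fun g => (hP g).trans (mem_ker_slopeHom_iff G hG.subset g).symm
  have : P.Normal := hPker ▸ MonoidHom.normal_ker _
  have hindex : P.index = 13 := by
    rw [hPker, Subgroup.index_ker, range_slopeHom G hG, card_range_powMonoidHom_two]
  have hcount : {S : Set G | stabilizer G S = P}.ncard = 2 ^ 13 - 2 := by
    rw [ncard_setOf_stabilizer_eq_of_index_prime P (hindex ▸ by norm_num), hindex]
  refine ⟨hcount, ?_⟩
  have horbits := ncard_setOf_stabilizer_eq_eq_index_mul (α := Set G) P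
  rw [hcount, hindex] at horbits
  have himage : Quotient.mk (orbitRel G (Set G)) '' {S | stabilizer G S = P} =
      {q | ∃ S, Quotient.mk (orbitRel G (Set G)) S = q ∧ stabilizer G S = P} :=
    Set.ext fun _ => exists_congr fun _ => and_comm
  rw [himage] at horbits
  omega
end

section
/- Let H be a subgroup of Sym(K). A point x ∈ |K| satisfies g • x = x for every g ∈ H if and only if there exist finitely many pairwise distinct H-orbits σ₁, …, σₖ on V, each of which (viewed as a finset of V) is a simplex of K and whose union σ₁ ∪ ⋯ ∪ σₖ is a simplex of K, together with real numbers t₁, …, tₖ > 0 with t₁ + ⋯ + tₖ = 1, such that x = Σⱼ tⱼ · b(σⱼ). (Equivalently, the H-fixed point set of |K| is the geometric realization of the simplicial complex K^H whose vertices are the barycenters of those H-orbits that are simplices of K, a set of such barycenters spanning a simplex of K^H if and only if the union of the corresponding orbits is a simplex of K.) -/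
/-- `K` is a simplicial complex on the vertex set `V`: a set of finsets closed under
taking subsets and containing every singleton. -/
def IsSimplicialComplex {V : Type*} (K : Set (Finset V)) : Prop :=
  (∀ σ ∈ K, ∀ τ : Finset V, τ ⊆ σ → τ ∈ K) ∧ (∀ v : V, ({v} : Finset V) ∈ K)

/-- A permutation `g` of `V` is a symmetry of `K`: it takes simplices to simplices and
non-simplices to non-simplices. -/
def IsComplexSym {V : Type*} (K : Set (Finset V)) (g : Equiv.Perm V) : Prop :=
  ∀ σ : Finset V, σ ∈ K ↔ σ.map g.toEmbedding ∈ K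

/-- `x : V → ℝ` is a point of the geometric realization `|K|`: it has nonnegative
coordinates summing to 1 and its support is a simplex of `K`. -/
def MemRealization {V : Type*} [Fintype V] (K : Set (Finset V)) (x : V → ℝ) : Prop :=
  (∀ v, 0 ≤ x v) ∧ (∑ v, x v = 1) ∧ ∃ σ ∈ K, ∀ v, (0 < x v ↔ v ∈ σ)

/-- The barycenter `b(σ)` of a finset `σ` of vertices, as a point of `ℝ^V`. -/
noncomputable def barycenter {V : Type*} [DecidableEq V] (σ : Finset V) : V → ℝ :=
  fun v => if v ∈ σ then ((σ.card : ℝ))⁻¹ else 0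

/-- `σ` is an orbit of the subgroup `H ≤ Perm V` acting on `V`. -/
def IsOrbitOf {V : Type*} (H : Subgroup (Equiv.Perm V)) (σ : Finset V) : Prop :=
  ∃ v : V, ∀ w : V, (w ∈ σ ↔ ∃ g ∈ H, g v = w)

/-- Let `H` be a subgroup of `Sym(K)`. A point `x ∈ |K|` is fixed by every `g ∈ H` if and
only if `x` is a convex combination, with positive coefficients summing to 1, of the
barycenters of finitely many pairwise distinct `H`-orbits on `V`, each of which is a simplex
of `K` and whose union is a simplex of `K`. -/
theorem statement18 {V : Type*} [Fintype V] [DecidableEq V]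
    (K : Set (Finset V)) (hK : IsSimplicialComplex K)
    (H : Subgroup (Equiv.Perm V)) (hH : ∀ g ∈ H, IsComplexSym K g)
    (x : V → ℝ) (hx : MemRealization K x) :
    (∀ g ∈ H, ∀ v : V, x (g⁻¹ v) = x v) ↔
      ∃ O : Finset (Finset V), ∃ t : Finset V → ℝ,
        (∀ σ ∈ O, IsOrbitOf H σ) ∧
        (∀ σ ∈ O, σ ∈ K) ∧
        (O.sup id ∈ K) ∧
        (∀ σ ∈ O, 0 < t σ) ∧
        (∑ σ ∈ O, t σ = 1) ∧
        (∀ v : V, x v = ∑ σ ∈ O, t σ * barycenter σ v) := by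

  classical
  obtain ⟨hx0, hx1, σ, hσK, hσsupp⟩ := hx
  constructor
  · intro hfix
    have hxg : ∀ g ∈ H, ∀ v, x (g v) = x v := by
      intro g hg v
      have := hfix g⁻¹ (inv_mem hg) v
      simpa using this
    set orb : V → Finset V := fun v => Finset.univ.filter (fun w => ∃ g ∈ H, g v = w) with horb
    have hmem_orb : ∀ v w, w ∈ orb v ↔ ∃ g ∈ H, g v = w := by
      intro v w; simp [horb]
    have hself : ∀ v, v ∈ orb v := fun v => (hmem_orb v v).2 ⟨1, H.one_mem, rfl⟩
    have horb_eq : ∀ v w, w ∈ orb v → orb w = orb v := by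
      intro v w hw
      obtain ⟨g, hg, rfl⟩ := (hmem_orb v w).1 hw
      ext u
      rw [hmem_orb, hmem_orb]
      constructor
      · rintro ⟨h, hh, rfl⟩
        exact ⟨h * g, H.mul_mem hh hg, rfl⟩
      · rintro ⟨h, hh, rfl⟩
        exact ⟨h * g⁻¹, H.mul_mem hh (inv_mem hg), by simp⟩
    have hconst : ∀ v, ∀ w ∈ orb v, x w = x v := by
      intro v w hw
      obtain ⟨g, hg, rfl⟩ := (hmem_orb v w).1 hw
      exact hxg g hg v
    have hsub : ∀ v ∈ σ, orb v ⊆ σ := by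
      intro v hv w hw
      have : 0 < x w := by rw [hconst v w hw]; exact (hσsupp v).2 hv
      exact (hσsupp w).1 this
    have hsup : (σ.image orb).sup id = σ := by
      ext w
      rw [Finset.mem_sup]
      constructor
      · rintro ⟨τ, hτ, hwτ⟩
        obtain ⟨v, hv, rfl⟩ := Finset.mem_image.1 hτ
        exact hsub v hv hwτ
      · intro hw
        exact ⟨orb w, Finset.mem_image_of_mem orb hw, hself w⟩
    refine ⟨σ.image orb, fun τ => ∑ w ∈ τ, x w, ?_, ?_, ?_, ?_, ?_, ?_⟩
    · intro τ hτ
      obtain ⟨v, hv, rfl⟩ := Finset.mem_image.1 hτ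
      exact ⟨v, fun w => hmem_orb v w⟩
    · intro τ hτ
      obtain ⟨v, hv, rfl⟩ := Finset.mem_image.1 hτ
      exact hK.1 σ hσK _ (hsub v hv)
    · rw [hsup]; exact hσK
    · intro τ hτ
      obtain ⟨v, hv, rfl⟩ := Finset.mem_image.1 hτ
      apply Finset.sum_pos
      · intro w hw
        exact (hσsupp w).2 (hsub v hv hw)
      · exact ⟨v, hself v⟩
    · have hdisj : (↑(σ.image orb) : Set (Finset V)).PairwiseDisjoint id := by
        intro τ₁ h₁ τ₂ h₂ hne
        simp only [Finset.coe_image, Set.mem_image] at h₁ h₂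
        obtain ⟨v₁, _, rfl⟩ := h₁
        obtain ⟨v₂, _, rfl⟩ := h₂
        refine Finset.disjoint_left.2 ?_
        intro w hw1 hw2
        exact hne ((horb_eq v₁ w hw1).symm.trans (horb_eq v₂ w hw2))
      show ∑ τ ∈ σ.image orb, ∑ w ∈ τ, x w = 1
      have hb := Finset.sum_biUnion (s := σ.image orb) (t := id) (f := x) hdisj
      rw [← Finset.sup_eq_biUnion, hsup] at hb
      simp only [id_eq] at hb
      rw [← hb, ← hx1]
      apply Finset.sum_subset (Finset.subset_univ σ)
      intro w _ hw
      have := mt (hσsupp w).1 hw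
      exact le_antisymm (not_lt.1 this) (hx0 w)
    · intro v
      by_cases hv : v ∈ σ
      · rw [Finset.sum_eq_single (orb v)]
        · show x v = (∑ w ∈ orb v, x w) * barycenter (orb v) v
          have hc : ∑ w ∈ orb v, x w = (orb v).card * x v := by
            rw [Finset.sum_congr rfl (hconst v), Finset.sum_const, nsmul_eq_mul]
          have hcard : ((orb v).card : ℝ) ≠ 0 := by
            have : 0 < (orb v).card := Finset.card_pos.2 ⟨v, hself v⟩
            exact_mod_cast this.ne'
          rw [hc]
          simp only [barycenter, hself v, if_true]
          field_simp
        · intro τ hτ hne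
          obtain ⟨w, hw, rfl⟩ := Finset.mem_image.1 hτ
          have hvτ : v ∉ orb w := fun h => hne (horb_eq w v h).symm
          simp [barycenter, hvτ]
        · intro h; exact absurd (Finset.mem_image_of_mem orb hv) h
      · have hx0' : x v = 0 :=
          le_antisymm (not_lt.1 (mt (hσsupp v).1 hv)) (hx0 v)
        rw [hx0']
        symm
        apply Finset.sum_eq_zero
        intro τ hτ
        obtain ⟨w, hw, rfl⟩ := Finset.mem_image.1 hτ
        have : v ∉ orb w := fun h => hv (hsub w hw h)
        simp [barycenter, this]
  · rintro ⟨O, t, hOorb, -, -, -, -, hxeq⟩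
    intro g hg v
    rw [hxeq, hxeq]
    apply Finset.sum_congr rfl
    intro τ hτ
    obtain ⟨v₀, hv₀⟩ := hOorb τ hτ
    have hmem : g⁻¹ v ∈ τ ↔ v ∈ τ := by
      rw [hv₀, hv₀]
      constructor
      · rintro ⟨h, hh, heq⟩
        exact ⟨g * h, H.mul_mem hg hh, by rw [Equiv.Perm.mul_apply, heq]; simp⟩
      · rintro ⟨h, hh, heq⟩
        exact ⟨g⁻¹ * h, H.mul_mem (inv_mem hg) hh, by rw [Equiv.Perm.mul_apply, heq]⟩
    simp only [barycenter]
    rw [if_congr hmem rfl rfl]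
end
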